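/- arXiv:math/0612553 — 4 statements merged into one kernel-verified Lean document; each statement's English description precedes it below -/
import Mathlib

section
/- Let S be a topological semigroup and let π: S×X→X be a non-expansive action of S on a metric space (X,d). Then the following are equivalent: (1) X can be extended by adding a fixed point of S, i.e., there exists a metric space (Y,d') equipped with a non-expansive action of S that has a fixed point, together with an isometric and equivariant embedding of X into Y; (2) every orbit S·x of S in X is a bounded set. -/
open Bornology Metric Set

universe u v

/-- A non-expansive (jointly continuous) action of a topological semigroup `S`
on a metric space `X`. -/
structure NonexpAction (S : Type*) (X : Type*) [Semigroup S] [TopologicalSpace S]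
    [MetricSpace X] where
  act : S → X → X
  mul_act : ∀ s t x, act (s * t) x = act s (act t x)
  nonexp : ∀ s x y, dist (act s x) (act s y) ≤ dist x y
  cont : Continuous fun p : S × X => act p.1 p.2

/-!
A fixed point `z` bounds every orbit, since `d(s·y, z) = d(s·y, s·z) ≤ d(y, z)`, and an isometric
equivariant embedding pulls this bound back to `X`.

Conversely, fix `x₀ ∈ X` and adjoin a point `∞` with
`d(x, ∞) = D x := 1 + sup {d(a, x₀) | a ∈ S¹·x}`. The function `D` is finite because orbits are
bounded, `1`-Lipschitz because `S¹·x` and `S¹·y` are within Hausdorff distance `d(x, y)`, dominates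
`d(·, x₀)`, and is non-increasing along the action because `S¹·(s·x) ⊆ S¹·x`. The first three facts make `X ∪ {∞}` a metric space; the last one makes
`s·∞ = ∞` extend the action non-expansively, and continuity at `∞` follows from non-expansiveness.
-/

open Filter Topology

/-- `f x` is the distance from `x` to a new point that can be adjoined to `X` (a positive
Katětov function). -/
structure KatetovFunction (X : Type*) [MetricSpace X] where
  toFun : X → ℝ
  pos : ∀ x, 0 < toFun x
  le_add_dist : ∀ x y, toFun x ≤ toFun y + dist x y
  dist_le_add : ∀ x y, dist x y ≤ toFun x + toFun y

namespace KatetovFunction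

variable {X : Type*} [MetricSpace X]

instance : CoeFun (KatetovFunction X) fun _ => X → ℝ := ⟨toFun⟩

def OnePointExtension (_f : KatetovFunction X) : Type _ := Option X

variable (f : KatetovFunction X)

def extDist : Option X → Option X → ℝ
  | some x, some y => dist x y
  | some x, none => f x
  | none, some y => f y
  | none, none => 0

noncomputable instance : MetricSpace f.OnePointExtension where
  dist := f.extDist
  dist_self := by rintro (_ | x) <;> simp [extDist]
  dist_comm := by rintro (_ | x) (_ | y) <;> simp [extDist, dist_comm]
  dist_triangle := by
    rintro (_ | x) (_ | y) (_ | z) <;> simp only [extDist]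
    · simp
    · linarith [f.pos z]
    · linarith [f.pos y]
    · linarith [f.le_add_dist z y, dist_comm y z]
    · linarith [f.pos x]
    · exact f.dist_le_add x z
    · linarith [f.le_add_dist x y]
    · exact dist_triangle x y z
  eq_of_dist_eq_zero := by
    rintro (_ | x) (_ | y) h <;> simp only [extDist] at h
    · rfl
    · exact absurd h (f.pos y).ne'
    · exact absurd h (f.pos x).ne'
    · rw [eq_of_dist_eq_zero h]

def of (x : X) : f.OnePointExtension := some x

def point : f.OnePointExtension := none

@[simp]
theorem dist_of_of (x y : X) : dist (f.of x) (f.of y) = dist x y := rfl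

@[simp]
theorem dist_of_point (x : X) : dist (f.of x) f.point = f x := rfl

theorem isometry_of : Isometry f.of :=
  Isometry.of_dist_eq f.dist_of_of

theorem isOpenEmbedding_of : IsOpenEmbedding f.of := by
  refine ⟨f.isometry_of.isEmbedding, isOpen_iff.2 ?_⟩
  rintro _ ⟨x, rfl⟩
  refine ⟨f x, f.pos x, fun y hy => ?_⟩
  cases y with
  | some y => exact ⟨y, rfl⟩
  | none => exact absurd (mem_ball'.1 hy) (f.dist_of_point x).ge.not_gt

end KatetovFunction

theorem continuousAt_of_isFixedPt_of_dist_le {S Y : Type*} [TopologicalSpace S]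
    [PseudoMetricSpace Y] {g : S → Y → Y} {z : Y} (hz : ∀ t, g t z = z)
    (hg : ∀ t y, dist (g t y) z ≤ dist y z) (s : S) :
    ContinuousAt (fun p : S × Y => g p.1 p.2) (s, z) := by
  have h : Tendsto (fun p : S × Y => dist p.2 z) (𝓝 (s, z)) (𝓝 0) := by
    simpa using (continuous_snd.dist (continuous_const (y := z))).tendsto (s, z)
  refine tendsto_iff_dist_tendsto_zero.2 (squeeze_zero (fun _ => dist_nonneg) (fun p => ?_) h)
  simpa only [hz] using hg p.1 p.2

namespace NonexpAction

variable {S X : Type*} [Semigroup S] [TopologicalSpace S] [MetricSpace X]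
  (π : NonexpAction S X)

theorem isBounded_orbit_of_isFixedPt {z : X} (hz : ∀ s, π.act s z = z) (x : X) :
    IsBounded (range fun s => π.act s x) := by
  refine isBounded_closedBall (x := z) (r := dist x z) |>.subset ?_
  rintro _ ⟨s, rfl⟩
  calc dist (π.act s x) z = dist (π.act s x) (π.act s z) := by rw [hz]
    _ ≤ dist x z := π.nonexp s x z

section Extend

variable (f : KatetovFunction X) (hf : ∀ s x, f (π.act s x) ≤ f x)

def extendAct (s : S) : f.OnePointExtension → f.OnePointExtension :=
  Option.map (π.act s)

theorem extendAct_point (s : S) : π.extendAct f s f.point = f.point := rfl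

include hf in
theorem dist_extendAct_le (s : S) (y z : f.OnePointExtension) :
    dist (π.extendAct f s y) (π.extendAct f s z) ≤ dist y z := by
  rcases y with _ | x <;> rcases z with _ | y
  · exact le_rfl
  · exact hf s y
  · exact hf s x
  · exact π.nonexp s x y

include hf in
theorem continuous_extendAct :
    Continuous fun p : S × f.OnePointExtension => π.extendAct f p.1 p.2 := by
  refine continuous_iff_continuousAt.2 ?_
  rintro ⟨s, _ | x⟩
  · exact continuousAt_of_isFixedPt_of_dist_le (π.extendAct_point f)
      (fun t y => π.dist_extendAct_le f hf t y f.point) s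
  · have h : Continuous ((fun p : S × f.OnePointExtension => π.extendAct f p.1 p.2) ∘
        Prod.map id f.of) :=
      f.isometry_of.continuous.comp π.cont
    exact ((IsOpenEmbedding.id.prodMap f.isOpenEmbedding_of).continuousAt_iff
      (x := (s, x))).1 h.continuousAt

def extend : NonexpAction S f.OnePointExtension where
  act := π.extendAct f
  mul_act s t := by
    rintro (_ | x)
    · rfl
    · exact congrArg f.of (π.mul_act s t x)
  nonexp := π.dist_extendAct_le f hf
  cont := π.continuous_extendAct f hf

end Extend

def ulift (π : NonexpAction S X) : NonexpAction S (ULift.{u} X) where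
  act s y := ULift.up (π.act s y.down)
  mul_act s t y := congrArg ULift.up (π.mul_act s t y.down)
  nonexp s y z := π.nonexp s y.down z.down
  cont := continuous_uliftUp.comp (π.cont.comp (continuous_id.prodMap continuous_uliftDown))

/-- The orbit of `x` under `S` with an identity adjoined. -/
def orbit₁ (x : X) : Set X := insert x (range fun s => π.act s x)

theorem orbit₁_act_subset (t : S) (x : X) : π.orbit₁ (π.act t x) ⊆ π.orbit₁ x := by
  rintro _ (rfl | ⟨s, rfl⟩)
  · exact mem_insert_of_mem _ ⟨t, rfl⟩
  · exact mem_insert_of_mem _ ⟨s * t, π.mul_act s t x⟩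

theorem hausdorffDist_orbit₁_le (x y : X) :
    hausdorffDist (π.orbit₁ x) (π.orbit₁ y) ≤ dist x y := by
  have near : ∀ x y, ∀ a ∈ π.orbit₁ x, ∃ b ∈ π.orbit₁ y, dist a b ≤ dist x y := by
    rintro x y _ (rfl | ⟨s, rfl⟩)
    · exact ⟨y, mem_insert _ _, le_rfl⟩
    · exact ⟨π.act s y, mem_insert_of_mem _ ⟨s, rfl⟩, π.nonexp s x y⟩
  refine hausdorffDist_le_of_mem_dist dist_nonneg (near x y) fun a ha => ?_
  simpa only [dist_comm y x] using near y x a ha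

section BoundedOrbits

variable {π} (hb : ∀ x, IsBounded (range fun s => π.act s x))
include hb

theorem isBounded_orbit₁ (x : X) : IsBounded (π.orbit₁ x) := (hb x).insert x

theorem hausdorffEDist_orbit₁_ne_top (x : X) {t : Set X} (ht : t.Nonempty) (ht' : IsBounded t) :
    hausdorffEDist (π.orbit₁ x) t ≠ ⊤ :=
  hausdorffEDist_ne_top_of_nonempty_of_bounded (insert_nonempty _ _) ht (isBounded_orbit₁ hb x) ht'

theorem dist_le_hausdorffDist_orbit₁ {x a : X} (ha : a ∈ π.orbit₁ x) (x₀ : X) :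
    dist a x₀ ≤ hausdorffDist (π.orbit₁ x) {x₀} :=
  infDist_singleton (x := a) ▸ infDist_le_hausdorffDist_of_mem ha
    (hausdorffEDist_orbit₁_ne_top hb x (singleton_nonempty x₀) isBounded_singleton)

/-- The new fixed point is put at distance `1 + sup {d(a, x₀) | a ∈ S¹·x}` from `x`. -/
noncomputable def orbitKatetov (x₀ : X) : KatetovFunction X where
  toFun x := 1 + hausdorffDist (π.orbit₁ x) {x₀}
  pos _ := add_pos_of_pos_of_nonneg one_pos hausdorffDist_nonneg
  le_add_dist x y := by
    have := hausdorffDist_triangle (t := π.orbit₁ y) (u := {x₀})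
      (hausdorffEDist_orbit₁_ne_top hb x (insert_nonempty _ _) (isBounded_orbit₁ hb y))
    linarith [π.hausdorffDist_orbit₁_le x y]
  dist_le_add x y := by
    have := dist_triangle_right x y x₀
    linarith [dist_le_hausdorffDist_orbit₁ hb (mem_insert x _) x₀,
      dist_le_hausdorffDist_orbit₁ hb (mem_insert y _) x₀]

theorem orbitKatetov_act_le (x₀ : X) (s : S) (x : X) :
    orbitKatetov hb x₀ (π.act s x) ≤ orbitKatetov hb x₀ x := by
  suffices hausdorffDist (π.orbit₁ (π.act s x)) {x₀} ≤ hausdorffDist (π.orbit₁ x) {x₀} by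
    simpa [orbitKatetov] using this
  refine hausdorffDist_le_of_infDist hausdorffDist_nonneg (fun a ha => ?_) ?_
  · rw [infDist_singleton]
    exact dist_le_hausdorffDist_orbit₁ hb (π.orbit₁_act_subset s x ha) x₀
  · intro _ h
    rw [mem_singleton_iff.1 h]
    calc infDist x₀ (π.orbit₁ (π.act s x)) ≤ dist x₀ (π.act s x) :=
          infDist_le_dist_of_mem (mem_insert _ _)
      _ ≤ hausdorffDist (π.orbit₁ x) {x₀} := by
          rw [dist_comm]
          exact dist_le_hausdorffDist_orbit₁ hb (mem_insert_of_mem _ ⟨s, rfl⟩) x₀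

theorem exists_katetovFunction_act_le : ∃ f : KatetovFunction X, ∀ s x, f (π.act s x) ≤ f x := by
  rcases isEmpty_or_nonempty X with _ | ⟨⟨x₀⟩⟩
  · exact ⟨⟨fun _ => 1, fun _ => one_pos, isEmptyElim, isEmptyElim⟩, fun _ => isEmptyElim⟩
  · exact ⟨orbitKatetov hb x₀, orbitKatetov_act_le hb x₀⟩

end BoundedOrbits

end NonexpAction

theorem stmt_0_general {S : Type u} {X : Type v} [Semigroup S] [TopologicalSpace S]
    [MetricSpace X] (π : NonexpAction S X) :
    (∃ (Y : Type (max u v)) (_ : MetricSpace Y) (σ : NonexpAction S Y) (f : X → Y) (z : Y),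
        (∀ s, σ.act s z = z) ∧ Isometry f ∧ ∀ s x, f (π.act s x) = σ.act s (f x)) ↔
      ∀ x : X, IsBounded (range fun s => π.act s x) := by
  constructor
  · rintro ⟨Y, _, σ, f, z, hz, hf, hfπ⟩ x
    refine (hf.antilipschitz.isBounded_preimage (σ.isBounded_orbit_of_isFixedPt hz (f x))).subset ?_
    rintro _ ⟨s, rfl⟩
    exact ⟨s, (hfπ s x).symm⟩
  · intro hb
    obtain ⟨f, hf⟩ := NonexpAction.exists_katetovFunction_act_le hb
    exact ⟨ULift (f.OnePointExtension), inferInstance, (π.extend f hf).ulift,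
      fun x => ULift.up (f.of x), ULift.up f.point, fun _ => rfl,
      Isometry.of_dist_eq fun _ _ => rfl, fun _ _ => rfl⟩

/-- A non-expansive action of a topological semigroup on a metric space can be extended
by adding a fixed point iff all orbits are bounded. -/
theorem stmt_0 {S : Type u} {X : Type v} [Semigroup S] [TopologicalSpace S] [ContinuousMul S]
    [MetricSpace X] (π : NonexpAction S X) :
    (∃ (Y : Type (max u v)) (_ : MetricSpace Y) (σ : NonexpAction S Y) (f : X → Y) (z : Y),
        (∀ s, σ.act s z = z) ∧ Isometry f ∧ ∀ s x, f (π.act s x) = σ.act s (f x)) ↔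
      ∀ x : X, IsBounded (range fun s => π.act s x) :=
  stmt_0_general π
end

section
/- Let S be a topological semigroup and let π: S×X→X be a non-expansive action of S on a metric space (X,d) such that every orbit S·x is a bounded set. Then there exists a metric space (Y,d') equipped with a non-expansive action of S possessing a fixed point, and an isometric equivariant embedding of X into Y. -/
open Bornology Metric Set

universe u v

section Aux

variable {S : Type u} {X : Type v} [Semigroup S] [TopologicalSpace S]
  [MetricSpace X] (π : NonexpAction S X) (x0 : X)

/-- The set of distances from the basepoint to `x` and its orbit. -/
def Tset (x : X) : Set ℝ := insert (dist x0 x) (range fun s => dist x0 (π.act s x))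

lemma Tset_nonempty (x : X) : (Tset π x0 x).Nonempty := ⟨dist x0 x, mem_insert _ _⟩

lemma Tset_bddAbove (hbdd : ∀ x : X, IsBounded (range fun s => π.act s x)) (x : X) :
    BddAbove (Tset π x0 x) := by
  obtain ⟨C, hC⟩ := (hbdd x).subset_closedBall x0
  refine ⟨max (dist x0 x) C, ?_⟩
  rintro d (rfl | ⟨s, rfl⟩)
  · exact le_max_left _ _
  · refine le_trans ?_ (le_max_right _ _)
    have := hC ⟨s, rfl⟩
    rwa [mem_closedBall, dist_comm] at this

/-- Distance from the added fixed point to `x`. -/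
noncomputable def rfun (x : X) : ℝ := 1 + sSup (Tset π x0 x)

variable (hbdd : ∀ x : X, IsBounded (range fun s => π.act s x))

include hbdd

lemma dist_le_sSup (x : X) : dist x0 x ≤ sSup (Tset π x0 x) :=
  le_csSup (Tset_bddAbove π x0 hbdd x) (mem_insert _ _)

lemma one_le_rfun (x : X) : 1 ≤ rfun π x0 x := by
  have h := dist_le_sSup π x0 hbdd x
  have := dist_nonneg (x := x0) (y := x)
  unfold rfun; linarith

lemma rfun_lip (x y : X) : rfun π x0 x ≤ dist x y + rfun π x0 y := by
  have h : sSup (Tset π x0 x) ≤ sSup (Tset π x0 y) + dist x y := by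
    refine csSup_le (Tset_nonempty π x0 x) ?_
    rintro d (rfl | ⟨s, rfl⟩)
    · have h1 : dist x0 x ≤ dist x0 y + dist y x := dist_triangle _ _ _
      have h2 : dist x0 y ≤ sSup (Tset π x0 y) := dist_le_sSup π x0 hbdd y
      rw [dist_comm y x] at h1; linarith
    · have h1 : dist x0 (π.act s x) ≤ dist x0 (π.act s y) + dist (π.act s y) (π.act s x) :=
        dist_triangle _ _ _
      have h2 : dist (π.act s y) (π.act s x) ≤ dist y x := π.nonexp s y x
      have h3 : dist x0 (π.act s y) ≤ sSup (Tset π x0 y) :=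
        le_csSup (Tset_bddAbove π x0 hbdd y) (mem_insert_of_mem _ ⟨s, rfl⟩)
      rw [dist_comm y x] at h2
      show dist x0 (π.act s x) ≤ _
      linarith
  unfold rfun; linarith

lemma rfun_act (t : S) (x : X) : rfun π x0 (π.act t x) ≤ rfun π x0 x := by
  have h : sSup (Tset π x0 (π.act t x)) ≤ sSup (Tset π x0 x) := by
    refine csSup_le (Tset_nonempty π x0 _) ?_
    rintro d (rfl | ⟨s, rfl⟩)
    · exact le_csSup (Tset_bddAbove π x0 hbdd x) (mem_insert_of_mem _ ⟨t, rfl⟩)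
    · show dist x0 (π.act s (π.act t x)) ≤ _
      rw [← π.mul_act]
      exact le_csSup (Tset_bddAbove π x0 hbdd x) (mem_insert_of_mem _ ⟨s * t, rfl⟩)
  unfold rfun; linarith

lemma dist_le_rfun_add (x y : X) : dist x y ≤ rfun π x0 x + rfun π x0 y := by
  have h1 : dist x y ≤ dist x x0 + dist x0 y := dist_triangle _ _ _
  have h2 : dist x0 x ≤ sSup (Tset π x0 x) := dist_le_sSup π x0 hbdd x
  have h3 : dist x0 y ≤ sSup (Tset π x0 y) := dist_le_sSup π x0 hbdd y
  rw [dist_comm x x0] at h1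
  unfold rfun; linarith

omit hbdd

/-- The distance on `Option X`: `none` is the new point. -/
noncomputable def Ydist : Option X → Option X → ℝ
  | none, none => 0
  | none, some x => rfun π x0 x
  | some x, none => rfun π x0 x
  | some x, some y => dist x y

include hbdd in
noncomputable def Ymetric : MetricSpace (Option X) where
  dist := Ydist π x0
  dist_self := by rintro (_ | x) <;> simp [Ydist]
  dist_comm := by rintro (_ | x) (_ | y) <;> simp [Ydist, dist_comm]
  dist_triangle := by
    have h1 : ∀ w, 1 ≤ rfun π x0 w := one_le_rfun π x0 hbdd
    rintro (_ | x) (_ | y) (_ | z) <;> simp only [Ydist]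
    · simp
    · linarith [h1 z]
    · linarith [h1 y]
    · have := rfun_lip π x0 hbdd z y; rw [dist_comm z y] at this
      linarith
    · linarith [h1 x]
    · exact dist_le_rfun_add π x0 hbdd x z
    · exact rfun_lip π x0 hbdd x y
    · exact dist_triangle x y z
  eq_of_dist_eq_zero := by
    have h1 : ∀ w, 1 ≤ rfun π x0 w := one_le_rfun π x0 hbdd
    rintro (_ | x) (_ | y) h <;> simp only [Ydist] at h
    · rfl
    · linarith [h1 y]
    · linarith [h1 x]
    · exact congrArg some (eq_of_dist_eq_zero h)

end Aux

/-- A non-expansive action that is separately continuous in the semigroup variable is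
jointly continuous. -/
lemma jointCont {S' Y : Type*} [TopologicalSpace S'] [PseudoMetricSpace Y]
    (act : S' → Y → Y) (nonexp : ∀ s y z, dist (act s y) (act s z) ≤ dist y z)
    (hc : ∀ y, Continuous fun s => act s y) :
    Continuous fun p : S' × Y => act p.1 p.2 := by
  rw [continuous_iff_continuousAt]
  rintro ⟨s0, y0⟩
  rw [ContinuousAt, Metric.tendsto_nhds]
  intro ε hε
  have h1 : ∀ᶠ s in nhds s0, dist (act s y0) (act s0 y0) < ε / 2 :=
    (Metric.tendsto_nhds.1 ((hc y0).continuousAt (x := s0))) (ε / 2) (by linarith)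
  have h2 : ∀ᶠ y in nhds y0, dist y y0 < ε / 2 := by
    filter_upwards [Metric.ball_mem_nhds y0 (show (0:ℝ) < ε / 2 by linarith)] with y hy
    exact hy
  rw [nhds_prod_eq]
  filter_upwards [h1.prod_inl (nhds y0), h2.prod_inr (nhds s0)] with p hp1 hp2
  calc dist (act p.1 p.2) (act s0 y0)
      ≤ dist (act p.1 p.2) (act p.1 y0) + dist (act p.1 y0) (act s0 y0) := dist_triangle _ _ _
    _ ≤ dist p.2 y0 + dist (act p.1 y0) (act s0 y0) := by
        have := nonexp p.1 p.2 y0; linarith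
    _ < ε / 2 + ε / 2 := by exact add_lt_add hp2 hp1
    _ = ε := by ring

/-- If all orbits of a non-expansive semigroup action on a metric space are bounded, then the
space can be extended by adding a fixed point: there is a metric space `Y` with a non-expansive
`S`-action having a fixed point `z`, and an isometric equivariant embedding of `X` into `Y`. -/
theorem stmt_2 {S : Type u} {X : Type v} [Semigroup S] [TopologicalSpace S] [ContinuousMul S]
    [MetricSpace X] (π : NonexpAction S X)
    (hbdd : ∀ x : X, IsBounded (range fun s => π.act s x)) :
    ∃ (Y : Type (max u v)) (_ : MetricSpace Y) (σ : NonexpAction S Y) (f : X → Y) (z : Y),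
      (∀ s, σ.act s z = z) ∧ Isometry f ∧ ∀ s x, f (π.act s x) = σ.act s (f x) := by
  rcases isEmpty_or_nonempty X with hX | hX
  · exact ⟨PUnit.{max u v + 1}, inferInstance,
      ⟨fun _ _ => PUnit.unit, fun _ _ _ => rfl, fun _ _ _ => by simp, continuous_const⟩,
      fun x => isEmptyElim x, PUnit.unit, fun s => rfl,
      fun x => isEmptyElim x, fun s x => isEmptyElim x⟩
  · obtain ⟨x0⟩ := hX
    letI : MetricSpace (Option X) := Ymetric π x0 hbdd
    have hnonexp : ∀ (s : S) (a b : ULift.{u} (Option X)),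
        dist (ULift.up (a.down.map (π.act s)) : ULift.{u} (Option X))
          (ULift.up (b.down.map (π.act s))) ≤ dist a b := by
      rintro s ⟨_ | x⟩ ⟨_ | y⟩
      · exact le_refl _
      · exact rfun_act π x0 hbdd s y
      · exact rfun_act π x0 hbdd s x
      · exact π.nonexp s x y
    have hiso : Isometry (fun w : X => (ULift.up (some w) : ULift.{u} (Option X))) :=
      Isometry.of_dist_eq fun a b => rfl
    have hcont : Continuous fun p : S × ULift.{u} (Option X) =>
        ULift.up (p.2.down.map (π.act p.1)) := by
      refine jointCont (fun (s : S) (y : ULift.{u} (Option X)) =>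
        ULift.up (y.down.map (π.act s))) hnonexp ?_
      rintro ⟨_ | x⟩
      · show Continuous fun _ : S => (ULift.up none : ULift.{u} (Option X))
        exact continuous_const
      · exact hiso.continuous.comp (π.cont.comp (continuous_id.prodMk continuous_const))
    exact ⟨ULift.{u} (Option X), inferInstance,
      { act := fun s y => ULift.up (y.down.map (π.act s))
        mul_act := by rintro s t ⟨_ | x⟩ <;> simp [π.mul_act]
        nonexp := hnonexp
        cont := hcont },
      fun x => ULift.up (some x), ULift.up none, fun s => rfl, hiso, fun s x => rfl⟩
end

section
/- Let S be a topological semigroup acting non-expansively on a metric space (X,d) such that every orbit S·x of S in X is a bounded set. Then there exists a real Banach space V, equipped with a linear non-expansive action of S by continuous linear operators of norm at most 1, and an equivariant isometric embedding of (X,d) into V. -/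
/-!
Fix a basepoint `p` and let `w x` be the supremum of `dist (t • x) p` over `t ∈ S ∪ {1}`. This
weight is `1`-Lipschitz, does not increase along the action, and satisfies
`dist x y ≤ w x + w y`. The `1`-Lipschitz functions `g` with `|g| ≤ w` are therefore permuted by
precomposition with the action, and for every pair `x, y` one of them (a clamped distance
function) has `g x - g y = dist x y`. Hence `x ↦ (g x)_g` embeds `X` isometrically and
equivariantly into `ℓ^∞` over these functions, on which `S` acts by reindexing with norm `≤ 1`.
The operators are uniformly Lipschitz and the orbit maps of the image points are continuous,
so the action is jointly continuous on the closed linear span of the image.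
-/
open Bornology Metric Set

universe u v

open scoped ENNReal NNReal

namespace lp

variable {ι κ 𝕜 E : Type*} [NontriviallyNormedField 𝕜] [NormedAddCommGroup E] [NormedSpace 𝕜 E]

lemma memℓp_infty_comp (f : lp (fun _ : κ => E) ∞) (σ : ι → κ) : Memℓp (f ∘ σ) ∞ :=
  memℓp_infty <| (memℓp_infty_iff.1 f.2).mono (range_comp_subset_range σ fun k => ‖f k‖)

variable (𝕜 E) in
noncomputable def compInfty (σ : ι → κ) : lp (fun _ : κ => E) ∞ →L[𝕜] lp (fun _ : ι => E) ∞ :=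
  LinearMap.mkContinuous
    { toFun := fun f => ⟨f ∘ σ, memℓp_infty_comp f σ⟩
      map_add' := fun _ _ => rfl
      map_smul' := fun _ _ => rfl }
    1 fun f => by
      simpa using lp.norm_le_of_forall_le (norm_nonneg f)
        fun i => lp.norm_apply_le_norm ENNReal.top_ne_zero f (σ i)

lemma norm_compInfty_le (σ : ι → κ) : ‖compInfty 𝕜 E σ‖ ≤ 1 :=
  LinearMap.mkContinuous_norm_le _ zero_le_one _

end lp

namespace ContinuousLinearMap

variable {S 𝕜 E : Type*} [TopologicalSpace S] [NontriviallyNormedField 𝕜] [NormedAddCommGroup E]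
  [NormedSpace 𝕜 E] {A : Set E}

lemma norm_restrict_le (f : E →L[𝕜] E) {p q : Submodule 𝕜 E} (h : ∀ x ∈ p, f x ∈ q) :
    ‖f.restrict h‖ ≤ ‖f‖ :=
  opNorm_le_bound _ (norm_nonneg f) fun v => by simpa using f.le_opNorm v

lemma mapsTo_topologicalClosure_span {f : E →L[𝕜] E} (hf : MapsTo f A A) :
    ∀ v ∈ (Submodule.span 𝕜 A).topologicalClosure, f v ∈ (Submodule.span 𝕜 A).topologicalClosure :=
  have hspan : Submodule.span 𝕜 A ∈ Module.End.invtSubmodule (f : E →ₗ[𝕜] E) := by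
    rw [Module.End.mem_invtSubmodule, Submodule.span_le]
    exact fun v hv => Submodule.subset_span (hf hv)
  Submodule.topologicalClosure_mem_invtSubmodule hspan

noncomputable def restrictClosureSpan (f : E →L[𝕜] E) (hf : MapsTo f A A) :
    (Submodule.span 𝕜 A).topologicalClosure →L[𝕜] (Submodule.span 𝕜 A).topologicalClosure :=
  f.restrict (mapsTo_topologicalClosure_span hf)

lemma restrictClosureSpan_comp_of_eq {f g h : E →L[𝕜] E} (hfgh : h = f.comp g)
    (hf : MapsTo f A A) (hg : MapsTo g A A) (hh : MapsTo h A A) :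
    restrictClosureSpan h hh = (restrictClosureSpan f hf).comp (restrictClosureSpan g hg) := by
  subst hfgh
  rfl

lemma continuous_apply_of_mem_span {T : S → E →L[𝕜] E}
    (hA : ∀ v ∈ A, Continuous fun s => T s v) {v : E} (hv : v ∈ Submodule.span 𝕜 A) :
    Continuous fun s => T s v := by
  induction hv using Submodule.span_induction with
  | mem v hv => exact hA v hv
  | zero => simpa using continuous_const
  | add v w _ _ hv hw => simp only [map_add]; exact hv.add hw
  | smul a v _ hv => simp only [map_smul]; exact hv.const_smul a

theorem continuous_restrictClosureSpan {T : S → E →L[𝕜] E} (C : ℝ≥0) (hC : ∀ s, ‖T s‖ ≤ C)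
    (hTA : ∀ s, MapsTo (T s) A A) (hA : ∀ v ∈ A, Continuous fun s => T s v) :
    Continuous fun p : S × (Submodule.span 𝕜 A).topologicalClosure =>
      restrictClosureSpan (T p.1) (hTA p.1) p.2 := by
  refine continuous_prod_of_dense_continuous_lipschitzWith' _ C
    (t := {w | (w : E) ∈ Submodule.span 𝕜 A}) ?_ (fun s => ?_) (fun w hw => ?_)
  · rw [Subtype.dense_iff]
    exact (Submodule.topologicalClosure_coe _).subset.trans <|
      closure_mono fun v hv => ⟨⟨v, Submodule.le_topologicalClosure _ hv⟩, hv, rfl⟩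
  · exact ((restrictClosureSpan (T s) (hTA s)).lipschitz).weaken
      ((norm_restrict_le _ _).trans (hC s))
  · exact (continuous_apply_of_mem_span hA hw).subtype_mk _

end ContinuousLinearMap

section DominatedLipschitz

variable {X : Type v} [MetricSpace X] {w : X → ℝ}

def LipDominated (w : X → ℝ) : Type v := {g : X → ℝ // LipschitzWith 1 g ∧ ∀ z, |g z| ≤ w z}

def LipDominated.comp (g : LipDominated w) (φ : X → X) (hφ : LipschitzWith 1 φ)
    (hwφ : ∀ z, w (φ z) ≤ w z) : LipDominated w :=
  ⟨g.1 ∘ φ, by simpa using g.2.1.comp hφ, fun z => (g.2.2 (φ z)).trans (hwφ z)⟩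

/-- The index type is lifted so that `ℓ^∞` lands in the universe `max u v` of the theorem. -/
noncomputable def evalLp (w : X → ℝ) (x : X) : lp (fun _ : ULift.{u} (LipDominated w) => ℝ) ∞ :=
  ⟨fun g => g.down.1 x, memℓp_infty ⟨w x, by
    rintro _ ⟨g, rfl⟩
    exact g.down.2.2 x⟩⟩

@[simp] lemma evalLp_apply (x : X) (g : ULift.{u} (LipDominated w)) : evalLp w x g = g.down.1 x :=
  rfl

/-- The clamping of `z ↦ a - dist z x` to `[-w, w]` with `a = min (w x) (dist x y)` realises
`dist x y` as a difference of values. -/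
lemma exists_lipDominated_sub_eq (hw0 : ∀ z, 0 ≤ w z) (hw : LipschitzWith 1 w) {x y : X}
    (hxy : dist x y ≤ w x + w y) : ∃ g : LipDominated w, g.1 x - g.1 y = dist x y := by
  set a := min (w x) (dist x y)
  have hlip : LipschitzWith 1 fun z => max (min (a - dist z x) (w z)) (-w z) := by
    simpa using (((LipschitzWith.const a).sub (LipschitzWith.dist_left x)).min hw).max hw.neg
  refine ⟨⟨fun z => max (min (a - dist z x) (w z)) (-w z), hlip, fun z => ?_⟩, ?_⟩
  · exact abs_le.2 ⟨le_max_right _ _, max_le (min_le_right _ _) (by linarith [hw0 z])⟩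
  · have hay : dist x y - w y ≤ a := le_min (by linarith) (by linarith [hw0 y])
    have ha : 0 ≤ a := le_min (hw0 x) dist_nonneg
    have hgx : max (min (a - dist x x) (w x)) (-w x) = a := by
      rw [dist_self, sub_zero, min_eq_left (min_le_left _ _), max_eq_left (by linarith [hw0 x])]
    have hgy : max (min (a - dist y x) (w y)) (-w y) = a - dist x y := by
      rw [dist_comm, min_eq_left (by linarith [hw0 y, min_le_right (w x) (dist x y)]),
        max_eq_left (by linarith)]
    simp only [hgx, hgy]
    ring

theorem isometry_evalLp (hw0 : ∀ z, 0 ≤ w z) (hw : LipschitzWith 1 w)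
    (hdist : ∀ x y, dist x y ≤ w x + w y) : Isometry (evalLp.{u} w) := by
  refine Isometry.of_dist_eq fun x y => ?_
  rw [dist_eq_norm]
  refine le_antisymm (lp.norm_le_of_forall_le dist_nonneg fun g => ?_) ?_
  · rw [lp.coeFn_sub, Pi.sub_apply, evalLp_apply, evalLp_apply, ← dist_eq_norm]
    simpa using g.down.2.1.dist_le_mul x y
  · obtain ⟨g, hg⟩ := exists_lipDominated_sub_eq hw0 hw (hdist x y)
    have := lp.norm_apply_le_norm ENNReal.top_ne_zero (evalLp.{u} w x - evalLp w y) ⟨g⟩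
    rwa [lp.coeFn_sub, Pi.sub_apply, evalLp_apply, evalLp_apply, hg,
      Real.norm_of_nonneg dist_nonneg] at this

end DominatedLipschitz

namespace NonexpAction

variable {S X : Type*} [Semigroup S] [TopologicalSpace S] [MetricSpace X] (π : NonexpAction S X)

lemma lipschitzWith_act (s : S) : LipschitzWith 1 (π.act s) :=
  LipschitzWith.of_dist_le_mul fun x y => by simpa using π.nonexp s x y

noncomputable def orbitRadius (p x : X) : ℝ := max (dist x p) (⨆ s, dist (π.act s x) p)

lemma dist_le_orbitRadius (p x : X) : dist x p ≤ π.orbitRadius p x := le_max_left _ _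

lemma bddAbove_range_dist_act {x : X} (hx : IsBounded (range fun s => π.act s x)) (p : X) :
    BddAbove (range fun s => dist (π.act s x) p) := by
  obtain ⟨r, hr⟩ := (isBounded_iff_subset_closedBall p).1 hx
  exact ⟨r, by rintro _ ⟨s, rfl⟩; exact hr ⟨s, rfl⟩⟩

lemma dist_act_le_orbitRadius {x : X} (hx : IsBounded (range fun s => π.act s x)) (p : X)
    (s : S) : dist (π.act s x) p ≤ π.orbitRadius p x :=
  le_max_of_le_right (le_ciSup (π.bddAbove_range_dist_act hx p) s)

lemma orbitRadius_act_le {x : X} (hx : IsBounded (range fun s => π.act s x)) (p : X) (s : S) :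
    π.orbitRadius p (π.act s x) ≤ π.orbitRadius p x := by
  refine max_le (π.dist_act_le_orbitRadius hx p s) (Real.iSup_le (fun t => ?_) ?_)
  · rw [← π.mul_act]
    exact π.dist_act_le_orbitRadius hx p (t * s)
  · exact dist_nonneg.trans (π.dist_le_orbitRadius p x)

lemma orbitRadius_le_add {y : X} (hy : IsBounded (range fun s => π.act s y)) (p x : X) :
    π.orbitRadius p x ≤ π.orbitRadius p y + dist x y := by
  refine max_le ?_ (Real.iSup_le (fun s => ?_) ?_)
  · linarith [dist_triangle x y p, π.dist_le_orbitRadius p y]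
  · linarith [dist_triangle (π.act s x) (π.act s y) p, π.nonexp s x y,
      π.dist_act_le_orbitRadius hy p s]
  · linarith [dist_nonneg (x := y) (y := p), π.dist_le_orbitRadius p y,
      dist_nonneg (x := x) (y := y)]

theorem exists_lipschitz_weight (hbdd : ∀ x : X, IsBounded (range fun s => π.act s x)) :
    ∃ w : X → ℝ, (∀ z, 0 ≤ w z) ∧ LipschitzWith 1 w ∧ (∀ x y, dist x y ≤ w x + w y) ∧
      ∀ s x, w (π.act s x) ≤ w x := by
  rcases isEmpty_or_nonempty X with hX | ⟨⟨p⟩⟩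
  · exact ⟨fun _ => 0, fun _ => le_rfl, LipschitzWith.of_le_add isEmptyElim, isEmptyElim,
      fun _ => isEmptyElim⟩
  refine ⟨π.orbitRadius p, fun z => dist_nonneg.trans (π.dist_le_orbitRadius p z),
    LipschitzWith.of_le_add fun x y => π.orbitRadius_le_add (hbdd y) p x, fun x y => ?_,
    fun s x => π.orbitRadius_act_le (hbdd x) p s⟩
  exact (dist_triangle_right x y p).trans
    (add_le_add (π.dist_le_orbitRadius p x) (π.dist_le_orbitRadius p y))

section Representation

variable {w : X → ℝ} (hw : ∀ s x, w (π.act s x) ≤ w x)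

noncomputable def lpRep (s : S) : lp (fun _ : ULift.{u} (LipDominated w) => ℝ) ∞ →L[ℝ]
    lp (fun _ : ULift.{u} (LipDominated w) => ℝ) ∞ :=
  lp.compInfty ℝ ℝ fun g => ⟨g.down.comp (π.act s) (π.lipschitzWith_act s) (hw s)⟩

lemma lpRep_evalLp (s : S) (x : X) : π.lpRep hw s (evalLp.{u} w x) = evalLp w (π.act s x) := rfl

lemma norm_lpRep_le (s : S) : ‖π.lpRep.{u} hw s‖ ≤ 1 := lp.norm_compInfty_le _

lemma lpRep_mul (s t : S) : π.lpRep.{u} hw (s * t) = (π.lpRep hw s).comp (π.lpRep hw t) := by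
  ext f g
  exact congrArg f <| ULift.ext _ _ <| Subtype.ext <| funext fun z =>
    congrArg g.down.1 (π.mul_act s t z)

end Representation

end NonexpAction

open ContinuousLinearMap in
theorem stmt_4_general {S : Type u} {X : Type v} [Semigroup S] [TopologicalSpace S]
    [MetricSpace X] (π : NonexpAction S X)
    (hbdd : ∀ x : X, IsBounded (range fun s => π.act s x)) :
    ∃ (V : Type (max u v)) (_ : NormedAddCommGroup V) (_ : NormedSpace ℝ V)
      (_ : CompleteSpace V) (ρ : S → V →L[ℝ] V),
      (∀ s, ‖ρ s‖ ≤ 1) ∧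
      (∀ s t : S, ρ (s * t) = (ρ s).comp (ρ t)) ∧
      Continuous (fun p : S × V => ρ p.1 p.2) ∧
      ∃ f : X → V, Isometry f ∧ ∀ s x, f (π.act s x) = ρ s (f x) := by
  obtain ⟨w, hw0, hw, hdist, hwact⟩ := π.exists_lipschitz_weight hbdd
  have hiso := isometry_evalLp.{u} hw0 hw hdist
  have hmaps (s : S) :
      MapsTo (π.lpRep.{u} hwact s) (range (evalLp.{u} w)) (range (evalLp.{u} w)) := by
    rintro _ ⟨x, rfl⟩
    exact ⟨π.act s x, (π.lpRep_evalLp hwact s x).symm⟩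
  have horbit : ∀ v ∈ range (evalLp.{u} w), Continuous fun s => π.lpRep hwact s v := by
    rintro _ ⟨x, rfl⟩
    exact (hiso.continuous.comp (π.cont.comp (continuous_id.prodMk continuous_const))).congr
      fun s => (π.lpRep_evalLp hwact s x).symm
  have hmem (x : X) :
      evalLp w x ∈ (Submodule.span ℝ (range (evalLp.{u} w))).topologicalClosure :=
    Submodule.le_topologicalClosure _ (Submodule.subset_span ⟨x, rfl⟩)
  refine ⟨_, inferInstance, inferInstance,
    (Submodule.isClosed_topologicalClosure _).completeSpace_coe,
    fun s => restrictClosureSpan (π.lpRep hwact s) (hmaps s),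
    fun s => (norm_restrict_le _ _).trans (π.norm_lpRep_le hwact s),
    fun s t => restrictClosureSpan_comp_of_eq (π.lpRep_mul hwact s t) _ _ _,
    continuous_restrictClosureSpan 1
      (fun s => (π.norm_lpRep_le hwact s).trans_eq NNReal.coe_one.symm) hmaps horbit,
    fun x => ⟨evalLp w x, hmem x⟩, Isometry.of_dist_eq fun x y => hiso.dist_eq x y,
    fun s x => Subtype.ext (π.lpRep_evalLp hwact s x)⟩

/-- If every orbit of a non-expansive semigroup action on a metric space is bounded, then
there is a real Banach space `V` with a jointly continuous linear non-expansive `S`-action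
by continuous linear operators of norm at most `1`, and an equivariant isometric embedding
of `X` into `V`. -/
theorem stmt_4 {S : Type u} {X : Type v} [Semigroup S] [TopologicalSpace S] [ContinuousMul S]
    [MetricSpace X] (π : NonexpAction S X)
    (hbdd : ∀ x : X, IsBounded (range fun s => π.act s x)) :
    ∃ (V : Type (max u v)) (_ : NormedAddCommGroup V) (_ : NormedSpace ℝ V)
      (_ : CompleteSpace V) (ρ : S → V →L[ℝ] V),
      (∀ s, ‖ρ s‖ ≤ 1) ∧
      (∀ s t : S, ρ (s * t) = (ρ s).comp (ρ t)) ∧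
      Continuous (fun p : S × V => ρ p.1 p.2) ∧
      ∃ f : X → V, Isometry f ∧ ∀ s x, f (π.act s x) = ρ s (f x) :=
  stmt_4_general π hbdd
end

section
/- Let S be a topological semigroup and let π: S×X→X be an action of S (i.e., (st)·x = s·(t·x)) on a metric space (X,d) such that d(s·x, s·y) ≤ d(x,y) for all s∈S, x,y∈X. If the restriction π: S×Y→X of the action to some dense subset Y of X is separately continuous (i.e., for each s∈S the map Y→X, y↦s·y, is continuous, and for each y∈Y the map S→X, s↦s·y, is continuous), then π: S×X→X is jointly continuous. -/
/-- If the restriction of a non-expansive action of a topological semigroup on a metric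
space `X` to a dense subset `Y` of `X` is separately continuous, then the action is
jointly continuous on `S × X`. -/
theorem stmt_7 {S X : Type*} [Semigroup S] [TopologicalSpace S] [ContinuousMul S]
    [MetricSpace X] (π : S → X → X)
    (hmul : ∀ s t x, π (s * t) x = π s (π t x))
    (hne : ∀ s x y, dist (π s x) (π s y) ≤ dist x y)
    (Y : Set X) (hY : Dense Y)
    (h1 : ∀ s, ContinuousOn (fun x => π s x) Y)
    (h2 : ∀ y ∈ Y, Continuous fun s => π s y) :
    Continuous fun p : S × X => π p.1 p.2 := by
  rw [continuous_iff_continuousAt]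
  rintro ⟨s₀, x₀⟩
  rw [ContinuousAt, Metric.tendsto_nhds]
  intro ε hε
  -- pick y ∈ Y close to x₀
  obtain ⟨y, hyb, hyY⟩ := Metric.dense_iff.mp hY x₀ (ε / 4) (by linarith)
  have hyd : dist y x₀ < ε / 4 := Metric.mem_ball.mp hyb
  -- continuity of s ↦ π s y at s₀
  have hc := (h2 y hyY).continuousAt (x := s₀)
  have hU : {s | dist (π s y) (π s₀ y) < ε / 4} ∈ nhds s₀ := by
    have := Metric.tendsto_nhds.mp hc (ε / 4) (by linarith)
    exact this
  have hV : Metric.ball x₀ (ε / 4) ∈ nhds x₀ := Metric.ball_mem_nhds _ (by linarith)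
  filter_upwards [prod_mem_nhds hU hV] with p hp
  obtain ⟨s, x⟩ := p
  obtain ⟨h3, hx⟩ := hp
  simp only [Set.mem_setOf_eq] at h3
  have hx2 : dist x x₀ < ε / 4 := Metric.mem_ball.mp hx
  calc dist (π s x) (π s₀ x₀)
      ≤ dist (π s x) (π s y) + dist (π s y) (π s₀ y) + dist (π s₀ y) (π s₀ x₀) :=
        dist_triangle4 _ _ _ _
    _ ≤ dist x y + dist (π s y) (π s₀ y) + dist y x₀ := by
        gcongr <;> [exact hne s x y; exact hne s₀ y x₀]
    _ ≤ (dist x x₀ + dist x₀ y) + dist (π s y) (π s₀ y) + dist y x₀ := by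
        gcongr; exact dist_triangle _ _ _
    _ < ε := by
        rw [dist_comm x₀ y] at *
        linarith
end
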